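/- Let S be a regular pomonoid (for every s ∈ S there exists x ∈ S with s = sxs). Then every right S-poset A_S is principally weakly po-flat; concretely, whenever a, a' ∈ A and s ∈ S satisfy as ≤ a's, one has a ⊗ s ≤ a' ⊗ s in the tensor product A ⊗_S Ss. -/
import Mathlib


/-- An `S`-tossing witnessing `a ⊗ b ≤ a' ⊗ b'` in `A ⊗_S B`, where `B ⊆ S` is
a left `S`-subposet of `S`: there are `c₁,…,cₙ ∈ A`, `sᵢ, tᵢ ∈ S` and
`u₀ = b, u₁, …, uₙ = b' ∈ B` with
`a ≤ c₁s₁`, `cᵢtᵢ ≤ c_{i+1}s_{i+1}`, `cₙtₙ ≤ a'` and `sᵢu_{i-1} ≤ tᵢuᵢ`. -/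
def TossLe {S A : Type} [Monoid S] [PartialOrder S] [PartialOrder A]
    (act : A → S → A) (B : Set S) (a : A) (b : S) (a' : A) (b' : S) : Prop :=
  ∃ n : ℕ, ∃ c : Fin (n + 1) → A, ∃ s t : Fin (n + 1) → S, ∃ u : Fin (n + 2) → S,
    u 0 = b ∧ u (Fin.last (n + 1)) = b' ∧ (∀ i, u i ∈ B) ∧
    a ≤ act (c 0) (s 0) ∧
    (∀ i : Fin n, act (c i.castSucc) (t i.castSucc) ≤ act (c i.succ) (s i.succ)) ∧
    act (c (Fin.last n)) (t (Fin.last n)) ≤ a' ∧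
    (∀ i : Fin (n + 1), s i * u i.castSucc ≤ t i * u i.succ)

/-- over a regular pomonoid `S`, every right `S`-poset is
principally weakly po-flat: `as ≤ a's` implies `a ⊗ s ≤ a' ⊗ s` in `A ⊗_S Ss`. -/
theorem regular_implies_principally_weakly_po_flat
    {S A : Type} [Monoid S] [PartialOrder S] [PartialOrder A]
    [CovariantClass S S (· * ·) (· ≤ ·)]
    [CovariantClass S S (Function.swap (· * ·)) (· ≤ ·)]
    (act : A → S → A)
    (act_mul : ∀ (a : A) (s t : S), act (act a s) t = act a (s * t))
    (act_one : ∀ a : A, act a 1 = a)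
    (act_monoA : ∀ (s : S) {a b : A}, a ≤ b → act a s ≤ act b s)
    (act_monoS : ∀ (a : A) {s t : S}, s ≤ t → act a s ≤ act a t)
    (hreg : ∀ s : S, ∃ x : S, s = s * x * s) :
    ∀ (a a' : A) (s : S), act a s ≤ act a' s →
      TossLe act {r : S | ∃ w : S, r = w * s} a s a' s := by
  intro a a' s hle
  obtain ⟨x, hx⟩ := hreg s
  refine ⟨1, ![a, a'], ![1, s * x], ![s * x, 1], fun _ => s, rfl, rfl,
    fun i => ⟨1, (one_mul s).symm⟩, ?_, ?_, ?_, ?_⟩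
  · show a ≤ act a 1
    simp [act_one]
  · intro i
    fin_cases i
    show act a (s * x) ≤ act a' (s * x)
    simpa [act_mul] using act_monoA x hle
  · show act a' 1 ≤ a'
    simp [act_one]
  · intro i
    fin_cases i
    · show (1 : S) * s ≤ s * x * s
      rw [one_mul, ← hx]
    · show s * x * s ≤ 1 * s
      rw [one_mul, ← hx]
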